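/- arXiv:1605.06882 — 3 statements merged into one kernel-verified Lean document; each statement's English description precedes it below -/
import Mathlib

section
/- Brandes' recursion: for a source s and a node v with v ≠ s, the dependency satisfies δ_{s*}(v) = Σ_{w : v ∈ P_s(w)} (σ_{sv}/σ_{sw}) · (1 + δ_{s*}(w)). -/
open Finset
open scoped Classical

/-- Number of shortest `s`-`t` paths (walks of length `d(s,t)`). -/
noncomputable def sigma' {V : Type*} (G : SimpleGraph V) (s t : V) : ℕ :=
  {p : G.Walk s t | p.length = G.dist s t}.ncard

/-- Number of shortest `s`-`t` paths having `v` as an internal node. -/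
noncomputable def sigmaThrough {V : Type*} (G : SimpleGraph V) (s t v : V) : ℕ :=
  {p : G.Walk s t | p.length = G.dist s t ∧ v ∈ p.support ∧ v ≠ s ∧ v ≠ t}.ncard

/-- Pair dependency `δ_{st}(v) = σ_{st}(v) / σ_{st}`. -/
noncomputable def pairDep {V : Type*} (G : SimpleGraph V) (s t v : V) : ℝ :=
  (sigmaThrough G s t v : ℝ) / (sigma' G s t : ℝ)

/-- Dependency of source `s` on `v`: `δ_{s*}(v) = Σ_{t ≠ s, t ≠ v} δ_{st}(v)`. -/
noncomputable def dep {V : Type*} [Fintype V] (G : SimpleGraph V) (s v : V) : ℝ :=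
  ∑ t ∈ Finset.univ.filter (fun t => t ≠ s ∧ t ≠ v), pairDep G s t v

/-!
A shortest `s`-`t` path through `v` splits uniquely at `v`, so, endpoints allowed, there are
`σ_sv σ_vt` of them if `d(s,v) + d(v,t) = d(s,t)` and none otherwise. Splitting a shortest
`v`-`t` path after its first edge gives `σ_vt = ∑ σ_wt` over the neighbours `w` one step closer
to `t`; when `v` lies on an `s`-`t` geodesic these are exactly the `w` with `v ∈ P_s(w)` that
stay on one. Hence `δ_st(v) = ∑_{v ∈ P_s(w)} σ_sv / σ_sw · (δ_st(w) + [w = t])` for every `t`,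
and summing over `t` gives the recursion.
-/

namespace SimpleGraph

variable {V : Type*} {G : SimpleGraph V}

theorem Walk.append_inj {u v w : V} {q q' : G.Walk u v} {r r' : G.Walk v w}
    (h : q.append r = q'.append r') (hl : q.length = q'.length) : q = q' ∧ r = r' := by
  have hd := List.append_inj (by simpa only [Walk.darts_append] using congrArg Walk.darts h)
    (by simpa only [Walk.length_darts] using hl)
  exact ⟨Walk.darts_injective hd.1, Walk.darts_injective hd.2⟩

theorem ncard_setOf_walk_length_eq_of_lt_dist {u v : V} {n : ℕ} (h : n < G.dist u v) :
    {p : G.Walk u v | p.length = n}.ncard = 0 := by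
  convert Set.ncard_empty (G.Walk u v)
  refine Set.eq_empty_of_forall_notMem fun p hp => ?_
  exact (dist_le p).not_gt ((show p.length = n from hp) ▸ h)

theorem ncard_setOf_walk_length_eq_add_one [Fintype V] (u v : V) (n : ℕ) :
    {p : G.Walk u v | p.length = n + 1}.ncard =
      ∑ w ∈ univ.filter (G.Adj u), {p : G.Walk w v | p.length = n}.ncard := by
  have hcount : ∀ m x y, {p : G.Walk x y | p.length = m}.ncard = (G.adjMatrix ℕ ^ m) x y := by
    intro m x y
    rw [adjMatrix_pow_apply_eq_card_walk, ← Nat.card_eq_fintype_card, Nat.card_coe_set_eq,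
      Nat.cast_id]
  simp only [hcount, pow_succ', Matrix.mul_apply, adjMatrix_apply, ite_mul, one_mul, zero_mul,
    sum_filter]

theorem Walk.length_takeUntil_dropUntil_eq_dist (hG : G.Connected)
    {s t v : V} (p : G.Walk s t) (hp : p.length = G.dist s t) (hv : v ∈ p.support) :
    (p.takeUntil v hv).length = G.dist s v ∧ (p.dropUntil v hv).length = G.dist v t := by
  have hsplit := congrArg Walk.length (p.take_spec hv)
  rw [Walk.length_append] at hsplit
  have h₁ := dist_le (p.takeUntil v hv)
  have h₂ := dist_le (p.dropUntil v hv)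
  have h₃ : G.dist s t ≤ G.dist s v + G.dist v t := hG.dist_triangle
  omega

theorem adj_dist_succ_and_geodesic_iff (hG : G.Connected) {s t v w : V} (hvw : G.Adj v w) :
    (G.dist s w = G.dist s v + 1 ∧ G.dist s w + G.dist w t = G.dist s t) ↔
      (G.dist s v + G.dist v t = G.dist s t ∧ G.dist w t + 1 = G.dist v t) := by
  have hd : G.dist v w = 1 := dist_eq_one_iff_adj.2 hvw
  have h₁ : G.dist s w ≤ G.dist s v + G.dist v w := hG.dist_triangle
  have h₂ : G.dist v t ≤ G.dist v w + G.dist w t := hG.dist_triangle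
  have h₃ : G.dist s t ≤ G.dist s v + G.dist v t := hG.dist_triangle
  have h₄ : G.dist s t ≤ G.dist s w + G.dist w t := hG.dist_triangle
  omega

end SimpleGraph

open SimpleGraph

-- Unlike `sigmaThrough`, endpoints are allowed: then the count factorises as `σ_sv σ_vt`
-- on every geodesic through `v` (`sigmaVia_eq`).
noncomputable def sigmaVia {V : Type*} (G : SimpleGraph V) (s t v : V) : ℕ :=
  {p : G.Walk s t | p.length = G.dist s t ∧ v ∈ p.support}.ncard

section Brandes

variable {V : Type*} {G : SimpleGraph V}

theorem sigma'_pos [Fintype V] (hG : G.Connected) (s t : V) : 0 < sigma' G s t :=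
  (Set.ncard_pos (Set.toFinite _)).2 (hG s t).exists_walk_length_eq_dist

theorem sigma'_eq_sum_sigma' [Fintype V] (hG : G.Connected) {v t : V} (hvt : v ≠ t) :
    sigma' G v t =
      ∑ w ∈ univ.filter (fun w => G.Adj v w ∧ G.dist w t + 1 = G.dist v t), sigma' G w t := by
  obtain ⟨n, hn⟩ := Nat.exists_eq_add_one_of_ne_zero (hG.pos_dist_of_ne hvt).ne'
  have hfilter : univ.filter (fun w => G.Adj v w ∧ G.dist w t + 1 = n + 1) =
      (univ.filter (G.Adj v)).filter (fun w => G.dist w t = n) := by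
    ext; simp
  rw [sigma', hn, ncard_setOf_walk_length_eq_add_one, hfilter,
    sum_filter (fun w => G.dist w t = n)]
  refine sum_congr rfl fun w hw => ?_
  split_ifs with hwt
  · rw [sigma', hwt]
  · have : G.dist v t ≤ G.dist v w + G.dist w t := hG.dist_triangle
    rw [dist_eq_one_iff_adj.2 (mem_filter.1 hw).2] at this
    exact ncard_setOf_walk_length_eq_of_lt_dist (by omega)

theorem sigma'_geodesic_eq_sum [Fintype V] (hG : G.Connected) {s t v : V} (hvt : v ≠ t) :
    (if G.dist s v + G.dist v t = G.dist s t then sigma' G v t else 0) =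
      ∑ w ∈ univ.filter (fun w => G.Adj v w ∧ G.dist s w = G.dist s v + 1),
        if G.dist s w + G.dist w t = G.dist s t then sigma' G w t else 0 := by
  have hfilter : univ.filter (fun w => (G.Adj v w ∧ G.dist s w = G.dist s v + 1) ∧
        G.dist s w + G.dist w t = G.dist s t) =
      univ.filter (fun w => G.Adj v w ∧
        (G.dist s v + G.dist v t = G.dist s t ∧ G.dist w t + 1 = G.dist v t)) :=
    filter_congr fun w _ => by
      rw [and_assoc]
      exact and_congr_right (adj_dist_succ_and_geodesic_iff hG)
  rw [← sum_filter, filter_filter, hfilter]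
  split_ifs with hv
  · simpa only [hv, true_and] using sigma'_eq_sum_sigma' hG hvt
  · simp [hv]

theorem sigmaThrough_eq_sigmaVia {s t v : V} (hs : v ≠ s) (ht : v ≠ t) :
    sigmaThrough G s t v = sigmaVia G s t v := by
  simp only [sigmaThrough, sigmaVia, hs, ht, ne_eq, not_false_eq_true, and_true]

theorem sigmaThrough_self_right (s t : V) : sigmaThrough G s t t = 0 := by
  simp [sigmaThrough]

theorem sigmaVia_self_right (s t : V) : sigmaVia G s t t = sigma' G s t := by
  simp [sigmaVia, sigma', Walk.end_mem_support]

theorem sigmaVia_eq (hG : G.Connected) (s t v : V) :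
    sigmaVia G s t v =
      sigma' G s v * if G.dist s v + G.dist v t = G.dist s t then sigma' G v t else 0 := by
  split_ifs with hv
  · have hbij : Set.BijOn (fun qr : G.Walk s v × G.Walk v t => qr.1.append qr.2)
        ({q | q.length = G.dist s v} ×ˢ {r | r.length = G.dist v t})
        {p | p.length = G.dist s t ∧ v ∈ p.support} := by
      refine ⟨?_, ?_, ?_⟩
      · rintro ⟨q, r⟩ ⟨hq, hr⟩
        exact ⟨by simp_all [Walk.length_append],
          (Walk.mem_support_append_iff q r).2 (Or.inl q.end_mem_support)⟩
      · rintro ⟨q, r⟩ ⟨hq, -⟩ ⟨q', r'⟩ ⟨hq', -⟩ h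
        exact Prod.ext_iff.2 (Walk.append_inj h (hq.trans hq'.symm))
      · rintro p ⟨hp, hv⟩
        exact ⟨(p.takeUntil v hv, p.dropUntil v hv),
          Walk.length_takeUntil_dropUntil_eq_dist hG p hp hv, p.take_spec hv⟩
    rw [sigmaVia, ← hbij.image_eq, hbij.injOn.ncard_image, Set.ncard_prod]
    rfl
  · rw [mul_zero, sigmaVia]
    convert Set.ncard_empty (G.Walk s t)
    refine Set.eq_empty_of_forall_notMem fun p ⟨hp, hpv⟩ => hv ?_
    obtain ⟨h₁, h₂⟩ := Walk.length_takeUntil_dropUntil_eq_dist hG p hp hpv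
    rw [← h₁, ← h₂, ← Walk.length_append, p.take_spec hpv, hp]

theorem sigmaVia_eq_zero_of_dist_lt (hG : G.Connected) {s t v : V}
    (h : G.dist s t < G.dist s v) : sigmaVia G s t v = 0 := by
  rw [sigmaVia_eq hG, if_neg (by omega), mul_zero]

theorem ne_of_dist_eq_dist_add_one {s v w : V} (h : G.dist s w = G.dist s v + 1) : w ≠ s := by
  rintro rfl
  simp at h

theorem sigmaVia_eq_sum [Fintype V] (hG : G.Connected) {s t v : V} (hvt : v ≠ t) :
    (sigmaVia G s t v : ℝ) =
      ∑ w ∈ univ.filter (fun w => G.Adj v w ∧ G.dist s w = G.dist s v + 1),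
        (sigma' G s v : ℝ) / sigma' G s w * sigmaVia G s t w := by
  have hterm : ∀ w ∈ univ.filter (fun w => G.Adj v w ∧ G.dist s w = G.dist s v + 1),
      (sigma' G s v : ℝ) / sigma' G s w * sigmaVia G s t w =
        sigma' G s v *
          ((if G.dist s w + G.dist w t = G.dist s t then sigma' G w t else 0 : ℕ) : ℝ) := by
    intro w _
    have := sigma'_pos hG s w
    rw [sigmaVia_eq hG, Nat.cast_mul]
    field_simp
  rw [sum_congr rfl hterm, ← mul_sum, ← Nat.cast_sum, ← sigma'_geodesic_eq_sum hG hvt,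
    sigmaVia_eq hG, Nat.cast_mul]

theorem pairDep_add_ite_eq [Fintype V] (hG : G.Connected) {s t w : V} (hw : w ≠ s) :
    pairDep G s t w + (if w = t then 1 else 0) = sigmaVia G s t w / sigma' G s t := by
  rcases eq_or_ne w t with rfl | hwt
  · have := sigma'_pos hG s w
    rw [pairDep, sigmaThrough_self_right, sigmaVia_self_right, if_pos rfl, Nat.cast_zero,
      zero_div, zero_add, div_self (by positivity)]
  · rw [pairDep, sigmaThrough_eq_sigmaVia hw hwt, if_neg hwt, add_zero]

theorem pairDep_eq_sum [Fintype V] (hG : G.Connected) {s v : V} (hv : v ≠ s) (t : V) :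
    pairDep G s t v =
      ∑ w ∈ univ.filter (fun w => G.Adj v w ∧ G.dist s w = G.dist s v + 1),
        (sigma' G s v : ℝ) / sigma' G s w * (pairDep G s t w + if w = t then 1 else 0) := by
  rw [sum_congr rfl fun w hw =>
    by rw [pairDep_add_ite_eq hG (ne_of_dist_eq_dist_add_one (mem_filter.1 hw).2.2)]]
  rcases eq_or_ne v t with rfl | hvt
  · rw [pairDep, sigmaThrough_self_right, Nat.cast_zero, zero_div]
    refine (sum_eq_zero fun w hw => ?_).symm
    rw [sigmaVia_eq_zero_of_dist_lt hG (by have := (mem_filter.1 hw).2.2; omega)]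
    simp
  · have hv' := pairDep_add_ite_eq hG hv (t := t)
    rw [if_neg hvt, add_zero] at hv'
    rw [hv', sigmaVia_eq_sum hG hvt, sum_div]
    simp only [mul_div_assoc]

theorem dep_eq_sum_pairDep [Fintype V] (s v : V) :
    dep G s v = ∑ t ∈ univ.filter (· ≠ s), pairDep G s t v := by
  rw [dep, ← filter_filter, sum_filter_of_ne]
  rintro t - ht rfl
  simp [pairDep, sigmaThrough_self_right] at ht

end Brandes

/-- Brandes' recursion: for `v ≠ s` in a connected graph,
`δ_{s*}(v) = Σ_{w : v ∈ P_s(w)} (σ_{sv}/σ_{sw}) · (1 + δ_{s*}(w))`, where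
`P_s(w)` is the set of neighbors `v` of `w` with `d(s,w) = d(s,v) + 1`. -/
theorem brandes_recursion {V : Type*} [Fintype V] (G : SimpleGraph V)
    (hG : G.Connected) (s v : V) (hv : v ≠ s) :
    dep G s v =
      ∑ w ∈ Finset.univ.filter
        (fun w => G.Adj v w ∧ G.dist s w = G.dist s v + 1),
        ((sigma' G s v : ℝ) / (sigma' G s w : ℝ)) * (1 + dep G s w) := by
  rw [dep_eq_sum_pairDep, sum_congr rfl fun t _ => pairDep_eq_sum hG hv t, sum_comm]
  refine sum_congr rfl fun w hw => ?_
  rw [← mul_sum, sum_add_distrib, ← dep_eq_sum_pairDep, sum_ite_eq, if_pos, add_comm]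
  simpa using ne_of_dist_eq_dist_add_one (mem_filter.1 hw).2.2
end

section
/- Any tree T_r obtained as a shortest-path tree rooted at a node r (every tree path from r to v has weight equal to ω_G(r,v)) is a 2-approximation for the S-MRCT problem when r ∈ S: RC_S(T_r) ≤ 2·RC_S(T*) for the optimal Steiner routing-cost tree T*, where RC_S(T) := Σ_{u,v∈S} ω_T(u,v). -/
/-!
For a root `r ∈ S` of a shortest-path tree `T_r`, routing every pair of terminals through `r`
gives `RC_S(T_r) ≤ 2|S| Σ_{u ∈ S} ω_G(r,u) ≤ 2|S| Σ_{u ∈ S} ω_T(r,u)` for any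
subgraph `T ≤ G` connecting `S`. Summed over `r ∈ S`, the right-hand sides add up to
`2|S| RC_S(T)`, so the average, and hence the minimum, of `RC_S(T_r)` over `r ∈ S` is at most
`2 RC_S(T)`.
-/

open Finset

/-- The total weight of a walk in a graph, for an edge-weight function `w`. -/
def walkWeight {V : Type*} {G : SimpleGraph V} (w : V → V → ℕ) :
    {u v : V} → G.Walk u v → ℕ
  | _, _, SimpleGraph.Walk.nil => 0
  | u, _, SimpleGraph.Walk.cons (v := x) _ p => w u x + walkWeight w p

/-- The weighted distance: least total weight of a walk from `u` to `v`. -/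
noncomputable def wdist {V : Type*} (G : SimpleGraph V) (w : V → V → ℕ) (u v : V) : ℕ :=
  sInf {n : ℕ | ∃ p : G.Walk u v, walkWeight w p = n}

/-- Routing cost of a subgraph `H` with respect to the terminal set `S`:
`RC_S(H) = Σ_{(u,v) ∈ S×S} ω_H(u,v)`. -/
noncomputable def routingCost {V : Type*} (H : SimpleGraph V) (w : V → V → ℕ)
    (S : Finset V) : ℕ :=
  ∑ p ∈ S ×ˢ S, wdist H w p.1 p.2

open SimpleGraph

section WeightedDistance

variable {V : Type*} {G H : SimpleGraph V} (w : V → V → ℕ)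

lemma walkWeight_append {u v x : V} (p : G.Walk u v) (q : G.Walk v x) :
    walkWeight w (p.append q) = walkWeight w p + walkWeight w q := by
  induction p with
  | nil => simp [walkWeight]
  | cons h p ih => simp only [Walk.cons_append, walkWeight, ih]; omega

lemma walkWeight_reverse (hsymm : ∀ a b, w a b = w b a) {u v : V} (p : G.Walk u v) :
    walkWeight w p.reverse = walkWeight w p := by
  induction p with
  | nil => rfl
  | cons h p ih =>
    rw [Walk.reverse_cons, walkWeight_append, ih]
    simp only [walkWeight, hsymm]
    omega

lemma walkWeight_mapLe (hle : G ≤ H) {u v : V} (p : G.Walk u v) :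
    walkWeight w (p.mapLe hle) = walkWeight w p := by
  induction p with
  | nil => rfl
  | cons h p ih => exact congrArg (w _ _ + ·) ih

lemma walkWeight_pos {w : V → V → ℕ} (hpos : ∀ a b, G.Adj a b → 0 < w a b) {u v : V}
    (hne : u ≠ v) (p : G.Walk u v) : 0 < walkWeight w p := by
  cases p with
  | nil => exact absurd rfl hne
  | cons h p => exact Nat.add_pos_left (hpos _ _ h) _

lemma wdist_le_walkWeight {u v : V} (p : G.Walk u v) : wdist G w u v ≤ walkWeight w p :=
  Nat.sInf_le ⟨p, rfl⟩

lemma exists_walk_walkWeight_eq_wdist {u v : V} (h : G.Reachable u v) :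
    ∃ p : G.Walk u v, walkWeight w p = wdist G w u v := by
  obtain ⟨p⟩ := h
  exact Nat.sInf_mem (s := {n | ∃ q : G.Walk u v, walkWeight w q = n}) ⟨_, p, rfl⟩

lemma wdist_comm (hsymm : ∀ a b, w a b = w b a) (u v : V) : wdist G w u v = wdist G w v u := by
  unfold wdist
  congr 1
  ext n
  constructor <;> rintro ⟨p, rfl⟩ <;> exact ⟨p.reverse, walkWeight_reverse w hsymm p⟩

lemma wdist_triangle {u v x : V} (huv : G.Reachable u v) (hvx : G.Reachable v x) :
    wdist G w u x ≤ wdist G w u v + wdist G w v x := by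
  obtain ⟨p, hp⟩ := exists_walk_walkWeight_eq_wdist w huv
  obtain ⟨q, hq⟩ := exists_walk_walkWeight_eq_wdist w hvx
  calc wdist G w u x ≤ walkWeight w (p.append q) := wdist_le_walkWeight w _
    _ = wdist G w u v + wdist G w v x := by rw [walkWeight_append, hp, hq]

lemma wdist_anti (hle : G ≤ H) {u v : V} (h : G.Reachable u v) :
    wdist H w u v ≤ wdist G w u v := by
  obtain ⟨p, hp⟩ := exists_walk_walkWeight_eq_wdist w h
  calc wdist H w u v ≤ walkWeight w (p.mapLe hle) := wdist_le_walkWeight w _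
    _ = wdist G w u v := by rw [walkWeight_mapLe, hp]

variable {w}

lemma reachable_of_wdist_pos {u v : V} (h : 0 < wdist G w u v) : G.Reachable u v := by
  obtain ⟨_, p, _⟩ := Nat.nonempty_of_pos_sInf h
  exact ⟨p⟩

lemma wdist_pos (hpos : ∀ a b, G.Adj a b → 0 < w a b) {u v : V} (h : G.Reachable u v)
    (hne : u ≠ v) : 0 < wdist G w u v := by
  obtain ⟨p, hp⟩ := exists_walk_walkWeight_eq_wdist w h
  exact hp ▸ walkWeight_pos hpos hne p

/-- `wdist` is `0` between unreachable vertices, so preserving a distance only forces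
reachability when that distance is positive. -/
lemma reachable_of_wdist_eq (hpos : ∀ a b, G.Adj a b → 0 < w a b) {u v : V}
    (hG : G.Reachable u v) (h : wdist H w u v = wdist G w u v) : H.Reachable u v := by
  rcases eq_or_ne u v with rfl | hne
  · rfl
  · exact reachable_of_wdist_pos (h ▸ wdist_pos hpos hG hne)

end WeightedDistance

section RoutingCost

variable {V : Type*} {H : SimpleGraph V} {w : V → V → ℕ} {S : Finset V}

lemma routingCost_eq_sum_sum (H : SimpleGraph V) (w : V → V → ℕ) (S : Finset V) :
    routingCost H w S = ∑ r ∈ S, ∑ u ∈ S, wdist H w r u :=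
  sum_product _ _ _

lemma routingCost_le_of_reachable (hsymm : ∀ a b, w a b = w b a) {r : V}
    (hreach : ∀ u ∈ S, H.Reachable r u) :
    routingCost H w S ≤ 2 * #S * ∑ u ∈ S, wdist H w r u := by
  calc routingCost H w S
      ≤ ∑ p ∈ S ×ˢ S, (wdist H w r p.1 + wdist H w r p.2) := by
        refine sum_le_sum fun p hp => ?_
        rw [mem_product] at hp
        rw [wdist_comm w hsymm r p.1]
        exact wdist_triangle w (hreach _ hp.1).symm (hreach _ hp.2)
    _ = 2 * #S * ∑ u ∈ S, wdist H w r u := by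
        rw [sum_add_distrib, sum_product, sum_product_right]
        simp only [sum_const, smul_eq_mul, ← mul_sum]
        ring

end RoutingCost

theorem spt_two_approx_SMRCT_general {V : Type*}
    (G : SimpleGraph V)
    (w : V → V → ℕ) (hsymm : ∀ a b, w a b = w b a)
    (hpos : ∀ a b, G.Adj a b → 0 < w a b)
    (S : Finset V) (hS : S.Nonempty)
    (Tr : V → SimpleGraph V)
    (hTr_spt : ∀ r v, wdist (Tr r) w r v = wdist G w r v)
    (T' : SimpleGraph V) (hT'_le : T' ≤ G)
    (hT'_conn : ∀ u ∈ S, ∀ v ∈ S, T'.Reachable u v) :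
    ∃ r ∈ S, routingCost (Tr r) w S ≤ 2 * routingCost T' w S := by
  have hvia_root (r) (hr : r ∈ S) :
      routingCost (Tr r) w S ≤ 2 * #S * ∑ u ∈ S, wdist T' w r u := by
    have hreach (u) (hu : u ∈ S) : (Tr r).Reachable r u :=
      reachable_of_wdist_eq hpos ((hT'_conn r hr u hu).mono hT'_le) (hTr_spt r u)
    calc routingCost (Tr r) w S ≤ 2 * #S * ∑ u ∈ S, wdist (Tr r) w r u :=
          routingCost_le_of_reachable hsymm hreach
      _ ≤ 2 * #S * ∑ u ∈ S, wdist T' w r u := by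
          gcongr with u hu
          rw [hTr_spt]
          exact wdist_anti w hT'_le (hT'_conn r hr u hu)
  have hsum : ∑ r ∈ S, routingCost (Tr r) w S ≤ ∑ _r ∈ S, 2 * routingCost T' w S :=
    calc ∑ r ∈ S, routingCost (Tr r) w S ≤ ∑ r ∈ S, 2 * #S * ∑ u ∈ S, wdist T' w r u :=
          sum_le_sum hvia_root
      _ = ∑ _r ∈ S, 2 * routingCost T' w S := by
          rw [← mul_sum, ← routingCost_eq_sum_sum, sum_const, smul_eq_mul]
          ring
  exact exists_le_of_sum_le hS hsum

/-- In a connected weighted graph `G` (symmetric positive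
weights) with terminal set `S`, let `Tr r` (for each `r`) be a shortest-path
tree rooted at `r`: a subgraph of `G` that is acyclic and preserves all
weighted distances from `r` (`ω_{T_r}(r,v) = ω_G(r,v)` for all `v`).  Then the
best of the trees `Tr r` with `r ∈ S` is a 2-approximation for the `S`-MRCT
problem: for every acyclic subgraph `T'` of `G` in which all terminals are
mutually connected, `min_{r ∈ S} RC_S(T_r) ≤ 2 · RC_S(T')`. -/
theorem spt_two_approx_SMRCT {V : Type*} [Fintype V]
    (G : SimpleGraph V) (hG : G.Connected)
    (w : V → V → ℕ) (hsymm : ∀ a b, w a b = w b a)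
    (hpos : ∀ a b, G.Adj a b → 0 < w a b)
    (S : Finset V) (hS : S.Nonempty)
    (Tr : V → SimpleGraph V)
    (hTr_le : ∀ r, Tr r ≤ G)
    (hTr_acyclic : ∀ r, (Tr r).IsAcyclic)
    (hTr_spt : ∀ r v, wdist (Tr r) w r v = wdist G w r v)
    (T' : SimpleGraph V) (hT'_le : T' ≤ G) (hT'_acyclic : T'.IsAcyclic)
    (hT'_conn : ∀ u ∈ S, ∀ v ∈ S, T'.Reachable u v) :
    ∃ r ∈ S, routingCost (Tr r) w S ≤ 2 * routingCost T' w S :=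
  spt_two_approx_SMRCT_general G w hsymm hpos S hS Tr hTr_spt T' hT'_le hT'_conn
end

section
/- Closeness centrality sampling guarantee (Eppstein–Wang): let ĉ(v) := (1/k)·Σ_{i=1}^{k} n·d(v,s_i)/(n-1) be the estimate of the inverse closeness centrality 1/CC(v) = Σ_u d(v,u)/(n-1) from k uniformly random sample nodes s_1,...,s_k. Then by Hoeffding's inequality, Pr[|ĉ(v) - 1/CC(v)| ≥ ε·D] ≤ 2·exp(-k·ε²·(n-1)²/(2n²)), so k = O(log(n)/ε²) samples suffice for error εD with high probability. -/
/-!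
Each summand `n · d(v, sᵢ) / (n - 1)` lies in `[0, n·D / (n - 1)]` and, `sᵢ` being uniform, has
mean `Σ_u d(v, u) / (n - 1) = 1 / CC(v)`. Hoeffding's inequality for independent variables with
values in an interval of width `w` bounds the two-sided deviation of the average of `k` of them
by `2 exp (-2 k t² / w²)`; with `t = ε D` this is `2 exp (-2 k ε² (n - 1)² / n²)`, which is even
stronger than the claimed bound.
-/

open Finset MeasureTheory ProbabilityTheory Real

section Hoeffding

variable {Ω ι : Type*} {mΩ : MeasurableSpace Ω} {μ : Measure Ω} [IsProbabilityMeasure μ]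
  {X : ι → Ω → ℝ} {a b : ℝ}

theorem measureReal_abs_sum_sub_integral_ge_le_of_iIndepFun (hindep : iIndepFun X μ)
    (hmeas : ∀ i, AEMeasurable (X i) μ) (hbd : ∀ i, ∀ᵐ ω ∂μ, X i ω ∈ Set.Icc a b)
    (s : Finset ι) {ε : ℝ} (hε : 0 ≤ ε) :
    μ.real {ω | ε ≤ |∑ i ∈ s, (X i ω - μ[X i])|} ≤
      2 * exp (-2 * ε ^ 2 / (#s * (b - a) ^ 2)) := by
  set Y : ι → Ω → ℝ := fun i ω => X i ω - μ[X i]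
  have hY : iIndepFun Y μ :=
    hindep.comp (fun i (t : ℝ) => t - ∫ ω, X i ω ∂μ) fun _ => measurable_sub_const _
  have hsubG : ∀ i ∈ s, HasSubgaussianMGF (Y i) ((‖b - a‖₊ / 2) ^ 2) μ :=
    fun i _ => hasSubgaussianMGF_of_mem_Icc (hmeas i) (hbd i)
  have hupper := HasSubgaussianMGF.measure_sum_ge_le_of_iIndepFun hY hsubG hε
  have hlower := HasSubgaussianMGF.measure_sum_ge_le_of_iIndepFun
    (hY.comp (fun _ => Neg.neg) fun _ => measurable_neg) (fun i hi => (hsubG i hi).neg) hε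
  have hexponent : -ε ^ 2 / (2 * ((∑ _i ∈ s, (‖b - a‖₊ / 2) ^ 2 : NNReal) : ℝ)) =
      -2 * ε ^ 2 / (#s * (b - a) ^ 2) := by
    have hvar : 2 * ((∑ _i ∈ s, (‖b - a‖₊ / 2) ^ 2 : NNReal) : ℝ) = #s * (b - a) ^ 2 / 2 := by
      push_cast [sum_const, nsmul_eq_mul, coe_nnnorm, Real.norm_eq_abs, div_pow, sq_abs]
      ring
    rw [hvar, div_div_eq_mul_div]
    ring
  have hsplit : {ω | ε ≤ |∑ i ∈ s, Y i ω|} ⊆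
      {ω | ε ≤ ∑ i ∈ s, Y i ω} ∪ {ω | ε ≤ ∑ i ∈ s, (Neg.neg ∘ Y i) ω} := by
    intro ω hω
    simpa [sum_neg_distrib] using le_abs.mp hω
  calc μ.real {ω | ε ≤ |∑ i ∈ s, Y i ω|}
      ≤ μ.real {ω | ε ≤ ∑ i ∈ s, Y i ω} + μ.real {ω | ε ≤ ∑ i ∈ s, (Neg.neg ∘ Y i) ω} :=
        (measureReal_mono hsplit).trans (measureReal_union_le _ _)
    _ ≤ 2 * exp (-2 * ε ^ 2 / (#s * (b - a) ^ 2)) := by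
        rw [hexponent] at hupper hlower
        linarith

theorem measureReal_abs_mean_sub_ge_le_of_iIndepFun [Fintype ι] (hι : 0 < Fintype.card ι)
    (hindep : iIndepFun X μ) (hmeas : ∀ i, AEMeasurable (X i) μ)
    (hbd : ∀ i, ∀ᵐ ω ∂μ, X i ω ∈ Set.Icc a b) {m : ℝ} (hm : ∀ i, μ[X i] = m)
    {ε : ℝ} (hε : 0 ≤ ε) :
    μ.real {ω | ε ≤ |(1 / (Fintype.card ι : ℝ)) * ∑ i, X i ω - m|} ≤
      2 * exp (-2 * Fintype.card ι * ε ^ 2 / (b - a) ^ 2) := by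
  have hN : (0 : ℝ) < Fintype.card ι := Nat.cast_pos.mpr hι
  have hevent : {ω | ε ≤ |(1 / (Fintype.card ι : ℝ)) * ∑ i, X i ω - m|} =
      {ω | Fintype.card ι * ε ≤ |∑ i ∈ univ, (X i ω - μ[X i])|} := by
    ext ω
    have hmean : (1 / (Fintype.card ι : ℝ)) * ∑ i, X i ω - m =
        (∑ i, (X i ω - μ[X i])) / Fintype.card ι := by
      simp only [hm, sum_sub_distrib, sum_const, card_univ, nsmul_eq_mul]
      field_simp
    show ε ≤ _ ↔ (Fintype.card ι : ℝ) * ε ≤ _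
    rw [hmean, abs_div, abs_of_pos hN, le_div_iff₀ hN, mul_comm]
  have hexponent : -2 * ((Fintype.card ι : ℝ) * ε) ^ 2 / (Fintype.card ι * (b - a) ^ 2) =
      -2 * Fintype.card ι * ε ^ 2 / (b - a) ^ 2 := by
    rw [show -2 * ((Fintype.card ι : ℝ) * ε) ^ 2 =
      Fintype.card ι * (-2 * Fintype.card ι * ε ^ 2) by ring, mul_div_mul_left _ _ hN.ne']
  have hsum := measureReal_abs_sum_sub_integral_ge_le_of_iIndepFun hindep hmeas hbd univ
    (by positivity : 0 ≤ (Fintype.card ι : ℝ) * ε)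
  rwa [← hevent, card_univ, hexponent] at hsum

end Hoeffding

theorem integral_comp_eq_sum_div_card_of_map_eq_uniform {Ω V : Type*} {mΩ : MeasurableSpace Ω}
    {μ : Measure Ω} [Fintype V] [Nonempty V] [MeasurableSpace V] [MeasurableSingletonClass V]
    {s : Ω → V} (hs : Measurable s) (hunif : μ.map s = (PMF.uniformOfFintype V).toMeasure)
    (f : V → ℝ) : ∫ ω, f (s ω) ∂μ = (∑ u, f u) / Fintype.card V := by
  rw [← integral_map hs.aemeasurable (measurable_of_finite f).aestronglyMeasurable, hunif,
    PMF.integral_eq_sum, div_eq_inv_mul, mul_sum]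
  simp [PMF.uniformOfFintype_apply]

theorem closeness_sampling_hoeffding_general {V : Type*} [Fintype V] [Nonempty V]
    [MeasurableSpace V] [MeasurableSingletonClass V]
    (G : SimpleGraph V)
    (n : ℕ) (hn : n = Fintype.card V) (hn2 : 2 ≤ n)
    (Dm : ℕ) (hDm : Dm = (Finset.univ ×ˢ Finset.univ).sup
      (fun p : V × V => G.dist p.1 p.2)) (hDm0 : 0 < Dm)
    {Ω : Type*} [MeasureSpace Ω] [IsProbabilityMeasure (ℙ : Measure Ω)]
    (k : ℕ) (hk : 0 < k)
    (s : Fin k → Ω → V)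
    (hmeas : ∀ i, Measurable (s i))
    (hindep : iIndepFun s ℙ)
    (hunif : ∀ i, Measure.map (s i) ℙ = (PMF.uniformOfFintype V).toMeasure)
    (ε : ℝ) (hε : 0 < ε) (v : V) :
    (ℙ {ω : Ω |
        ε * Dm ≤
          |(1 / (k : ℝ)) * ∑ i : Fin k,
              (n : ℝ) * (G.dist v (s i ω) : ℝ) / ((n : ℝ) - 1) -
            (∑ u : V, (G.dist v u : ℝ)) / ((n : ℝ) - 1)|}).toReal ≤
      2 * Real.exp (-(k : ℝ) * ε ^ 2 * ((n : ℝ) - 1) ^ 2 / (2 * (n : ℝ) ^ 2)) := by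
  have hn1 : (0 : ℝ) < n - 1 := by
    rw [sub_pos, Nat.one_lt_cast]; omega
  set f : V → ℝ := fun u => n * G.dist v u / (n - 1)
  have hdist : ∀ u, G.dist v u ≤ Dm := fun u =>
    hDm ▸ le_sup (f := fun p : V × V => G.dist p.1 p.2) (b := (v, u)) (mem_univ _)
  have hbd : ∀ u, f u ∈ Set.Icc 0 ((n : ℝ) * Dm / (n - 1)) := fun u =>
    ⟨by positivity, div_le_div_of_nonneg_right (by gcongr; exact_mod_cast hdist u) hn1.le⟩
  have hmean : ∀ i, ∫ ω, f (s i ω) = (∑ u, (G.dist v u : ℝ)) / (n - 1) := fun i => by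
    rw [integral_comp_eq_sum_div_card_of_map_eq_uniform (hmeas i) (hunif i), ← hn, ← sum_div,
      ← mul_sum]
    field_simp
  have hhoeffding := measureReal_abs_mean_sub_ge_le_of_iIndepFun (X := fun i ω => f (s i ω))
    (by simpa using hk) (hindep.comp (fun _ => f) fun _ => measurable_of_finite f)
    (fun i => (measurable_of_finite f).comp_aemeasurable (hmeas i).aemeasurable)
    (fun i => ae_of_all _ fun ω => hbd (s i ω)) hmean (by positivity : 0 ≤ ε * Dm)
  rw [Fintype.card_fin] at hhoeffding
  refine hhoeffding.trans ?_
  gcongr 2 * exp ?_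
  have hDm' : (0 : ℝ) < Dm := Nat.cast_pos.mpr hDm0
  have hsharp : -2 * k * (ε * Dm) ^ 2 / ((n : ℝ) * Dm / (n - 1) - 0) ^ 2 =
      4 * (-k * ε ^ 2 * (n - 1) ^ 2 / (2 * n ^ 2)) := by
    field_simp
    ring
  have hnonpos : -k * ε ^ 2 * (n - 1) ^ 2 / (2 * n ^ 2) ≤ 0 := by
    rw [neg_mul, neg_mul, neg_div, neg_nonpos]
    positivity
  rw [hsharp]
  linarith

/-- Eppstein–Wang sampling guarantee via Hoeffding.  Let `G` be
a connected unweighted graph on `n` nodes with diameter `Dm`, and let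
`s_1, …, s_k` be i.i.d. uniformly random nodes on a probability space `Ω`.
For a node `v`, the estimate `ĉ(v) = (1/k) Σ_i n·d(v,s_i)/(n-1)` of the
inverse closeness centrality `1/CC(v) = Σ_u d(v,u)/(n-1)` satisfies
`Pr[|ĉ(v) - 1/CC(v)| ≥ ε·Dm] ≤ 2·exp(-k·ε²·(n-1)²/(2n²))`. -/
theorem closeness_sampling_hoeffding {V : Type*} [Fintype V] [Nonempty V]
    [MeasurableSpace V] [MeasurableSingletonClass V]
    (G : SimpleGraph V) (hG : G.Connected)
    (n : ℕ) (hn : n = Fintype.card V) (hn2 : 2 ≤ n)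
    (Dm : ℕ) (hDm : Dm = (Finset.univ ×ˢ Finset.univ).sup
      (fun p : V × V => G.dist p.1 p.2)) (hDm0 : 0 < Dm)
    {Ω : Type*} [MeasureSpace Ω] [IsProbabilityMeasure (ℙ : Measure Ω)]
    (k : ℕ) (hk : 0 < k)
    (s : Fin k → Ω → V)
    (hmeas : ∀ i, Measurable (s i))
    (hindep : iIndepFun s ℙ)
    (hunif : ∀ i, Measure.map (s i) ℙ = (PMF.uniformOfFintype V).toMeasure)
    (ε : ℝ) (hε : 0 < ε) (v : V) :
    (ℙ {ω : Ω |
        ε * Dm ≤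
          |(1 / (k : ℝ)) * ∑ i : Fin k,
              (n : ℝ) * (G.dist v (s i ω) : ℝ) / ((n : ℝ) - 1) -
            (∑ u : V, (G.dist v u : ℝ)) / ((n : ℝ) - 1)|}).toReal ≤
      2 * Real.exp (-(k : ℝ) * ε ^ 2 * ((n : ℝ) - 1) ^ 2 / (2 * (n : ℝ) ^ 2)) :=
  closeness_sampling_hoeffding_general G n hn hn2 Dm hDm hDm0 k hk s hmeas hindep hunif ε hε v
end
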